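/- Let G be a group with elements f_1^(r), f_2^(r), f_1^(l), f_2^(k), c, d (with k ≠ l) satisfying: [f_i^(k'), f_j^(l')] = V_{i,j} for all pairs of distinct upper indices (V_{i,i} = 1, V_{1,2} = d^{-1}, V_{2,1} = d), f_2^(k) d (f_2^(k))^{-1} = f_2^(r) d (f_2^(r))^{-1}, and f_2^(k) c (f_2^(k))^{-1} = f_2^(r) c (f_2^(r))^{-1} (and similarly for index 1). Then c commutes with δ := [f_2^(r), f_1^(r)] d^{-1}, i.e. c^{-1} f_2^(r) f_1^(r) (f_2^(r))^{-1} f_2^(k) (f_1^(r))^{-1} (f_2^(k))^{-1} c = f_2^(r) f_1^(r) (f_2^(r))^{-1} f_2^(k) (f_1^(r))^{-1} (f_2^(k))^{-1} under the stated hypotheses (requiring the existence of the auxiliary index l distinct from k, i.e. r ≥ 4 in the original setting). -/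

import Mathlib

/-!
Put `e := (f₂⁽ᵏ⁾)⁻¹ f₂⁽ʳ⁾` and `g := (f₁⁽ˡ⁾)⁻¹ f₁⁽ʳ⁾`. The conjugation relations say that
`e` and `g` commute with `c` and `d`, and the commutator relations make them commute with `f₁⁽ˡ⁾` as well.
Since `d = [f₂⁽ᵏ⁾, f₁⁽ʳ⁾]`, the element `δ = [f₂⁽ʳ⁾, f₁⁽ʳ⁾] d⁻¹` is the conjugate of `[e, g]` by
`w := d f₁⁽ˡ⁾`. As `[e, g]` centralises `c`, `d` and `f₁⁽ˡ⁾`, it commutes with `w⁻¹ c w`, that is,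
`δ` commutes with `c`.
-/

open scoped commutatorElement

open Subgroup

section

variable {G : Type*} [Group G]

theorem commute_inv_mul_of_conj_eq {a b x : G} (h : a * x * a⁻¹ = b * x * b⁻¹) :
    Commute (b⁻¹ * a) x :=
  calc b⁻¹ * a * x = b⁻¹ * (a * x * a⁻¹) * a := by group
    _ = b⁻¹ * (b * x * b⁻¹) * a := by rw [h]
    _ = x * (b⁻¹ * a) := by group

theorem commute_inv_mul_of_commutatorElement_eq {a b x : G} (h : ⁅a, x⁆ = ⁅b, x⁆) :
    Commute (b⁻¹ * a) x :=
  commute_inv_mul_of_conj_eq (mul_right_cancel (b := x⁻¹) h)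

theorem Commute.commutatorElement_mul_right {x w : G} (h : Commute x w) (y : G) :
    ⁅x, w * y⁆ = w * ⁅x, y⁆ * w⁻¹ := by
  rw [commutatorElement_mul_right_eq_mul_conj, commutatorElement_eq_one_iff_commute.mpr h,
    one_mul]

theorem commutatorElement_mul_inv_eq_conj_commutatorElement {a b b₁ d u : G}
    (hbb₁ : Commute b b₁) (hd : ⁅b₁, a⁆ = d) (hed : Commute (b₁⁻¹ * b) d)
    (heu : Commute (b₁⁻¹ * b) u) :
    ⁅b, a⁆ * d⁻¹ = (d * u) * ⁅b₁⁻¹ * b, u⁻¹ * a⁆ * (d * u)⁻¹ := by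
  have heb₁ : Commute b₁ (b₁⁻¹ * b) := (Commute.refl b₁).inv_right.mul_right hbb₁.symm
  have hconj : b₁ * a * b₁⁻¹ = (d * u) * (u⁻¹ * a) := by rw [← hd]; group
  calc ⁅b, a⁆ * d⁻¹ = b₁ * ⁅b₁⁻¹ * b, a⁆ * b₁⁻¹ := by
        rw [← hd]; simp only [commutatorElement_def]; group
    _ = ⁅b₁⁻¹ * b, (d * u) * (u⁻¹ * a)⁆ := by
        rw [conjugate_commutatorElement, heb₁.mul_inv_cancel, hconj]
    _ = (d * u) * ⁅b₁⁻¹ * b, u⁻¹ * a⁆ * (d * u)⁻¹ :=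
        (hed.mul_right heu).commutatorElement_mul_right _

theorem Subgroup.commute_conj_commutatorElement_of_mem_centralizer {S : Set G} {x y w c : G}
    (hx : x ∈ centralizer S) (hy : y ∈ centralizer S) (hw : w ∈ closure S) (hc : c ∈ closure S) :
    Commute (w * ⁅x, y⁆ * w⁻¹) c := by
  rw [← centralizer_closure] at hx hy
  have hxy : ⁅x, y⁆ ∈ centralizer (closure S) := by
    rw [commutatorElement_def]
    exact mul_mem (mul_mem (mul_mem hx hy) (inv_mem hx)) (inv_mem hy)
  have hconj : Commute ⁅x, y⁆ (w⁻¹ * c * w) :=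
    (mem_centralizer_iff.mp hxy _ (mul_mem (mul_mem (inv_mem hw) hc) hw)).symm
  simpa [mul_assoc] using (Commute.conj_iff w).mpr hconj

end

theorem stmt17 {G : Type*} [Group G] (F : Fin 2 → Fin 3 → G) (c d : G)
    (V : Fin 2 → Fin 2 → G)
    (hVdef : ∀ i j, V i j = if i = j then 1 else (if i = 0 then d⁻¹ else d))
    (hV : ∀ (i j : Fin 2) (s t : Fin 3), s ≠ t → ⁅F i s, F j t⁆ = V i j)
    (hd : ∀ (i : Fin 2) (s t : Fin 3), F i s * d * (F i s)⁻¹ = F i t * d * (F i t)⁻¹)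
    (hc : ∀ (i : Fin 2) (s t : Fin 3), F i s * c * (F i s)⁻¹ = F i t * c * (F i t)⁻¹) :
    c⁻¹ * (F 1 0 * F 0 0 * (F 1 0)⁻¹ * F 1 1 * (F 0 0)⁻¹ * (F 1 1)⁻¹) * c =
      F 1 0 * F 0 0 * (F 1 0)⁻¹ * F 1 1 * (F 0 0)⁻¹ * (F 1 1)⁻¹ := by
  have hbb₁ : Commute (F 1 0) (F 1 1) :=
    commutatorElement_eq_one_iff_commute.mp (by simpa [hVdef] using hV 1 1 0 1 (by decide))
  have hau : Commute (F 0 0) (F 0 2) :=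
    commutatorElement_eq_one_iff_commute.mp (by simpa [hVdef] using hV 0 0 0 2 (by decide))
  have hd_eq : ⁅F 1 1, F 0 0⁆ = d := by
    rw [← commutatorElement_inv, hV 0 1 0 1 (by decide), hVdef]
    simp
  have heu : Commute ((F 1 1)⁻¹ * F 1 0) (F 0 2) :=
    commute_inv_mul_of_commutatorElement_eq
      ((hV 1 0 0 2 (by decide)).trans (hV 1 0 1 2 (by decide)).symm)
  have hgu : Commute ((F 0 2)⁻¹ * F 0 0) (F 0 2) := (Commute.refl _).inv_left.mul_left hau
  have hmem : ∀ x, Commute x c → Commute x d → Commute x (F 0 2) →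
      x ∈ centralizer {c, d, F 0 2} := fun x hxc hxd hxu => by
    simp only [mem_centralizer_iff, Set.mem_insert_iff, Set.mem_singleton_iff, forall_eq_or_imp,
      forall_eq]
    exact ⟨hxc.symm.eq, hxd.symm.eq, hxu.symm.eq⟩
  have hδ_eq : F 1 0 * F 0 0 * (F 1 0)⁻¹ * F 1 1 * (F 0 0)⁻¹ * (F 1 1)⁻¹ =
      ⁅F 1 0, F 0 0⁆ * d⁻¹ := by
    rw [← hd_eq]; simp only [commutatorElement_def]; group
  have hδ : Commute (⁅F 1 0, F 0 0⁆ * d⁻¹) c := by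
    rw [commutatorElement_mul_inv_eq_conj_commutatorElement hbb₁ hd_eq
      (commute_inv_mul_of_conj_eq (hd 1 0 1)) heu]
    exact commute_conj_commutatorElement_of_mem_centralizer
      (hmem _ (commute_inv_mul_of_conj_eq (hc 1 0 1)) (commute_inv_mul_of_conj_eq (hd 1 0 1)) heu)
      (hmem _ (commute_inv_mul_of_conj_eq (hc 0 0 2)) (commute_inv_mul_of_conj_eq (hd 0 0 2)) hgu)
      (mul_mem (subset_closure (by simp)) (subset_closure (by simp))) (subset_closure (by simp))
  rw [hδ_eq, mul_assoc, hδ.eq, inv_mul_cancel_left]
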